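/- Assume c_k ≥ 1 for every edge e_k and d_j ≤ 1 for every job j (the no-bottleneck assumption after scaling c_min = 1). Define rounded capacities c'_k = 2^{⌊log₂ c_k⌋}. If J admits a Round-SAP packing into K rounds under the capacities (c_k), then J admits a Round-SAP packing into 4K rounds under the rounded capacities (c'_k) in which additionally no rectangle is sliced by a horizontal line at an integer power of 2, i.e., there is no job j and integer t ≥ 0 with h_j < 2^t < h_j + d_j. -/

import Mathlib

/-!
Every job is moved down into a dyadic slot: slot `n ≥ 1` is the band `[2^(n-1), 2^n]` and
slot `0` is `[0, 1]`. The top `2^n` of the slot never exceeds `max 1 (h_j + d_j)`, so the job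
fits under the rounded capacity, and a rectangle inside a slot crosses no power of two.
A job crossing a line `2^τ` is put right below it; a job below `1` stays; a job in `[1, 2]`
drops by `1`; a job in `[2^(b+1), 2^(b+2)]` drops by `2^b` if it lies below the middle line
`3·2^b`, by `2^(b+1)` if it lies above it, and is put right below `2^(b+1)` if it crosses it.
Each round splits into four rounds according to the kind of move. Inside one of them, jobs in
different slots are separated vertically, while jobs in the same slot were either shifted by a
common amount or all crossed a common horizontal line, hence had disjoint horizontal extents;
either way they stay disjoint.
-/

open scoped Classical

namespace PathSAP

variable {ι : Type*}

/-- Job `i` uses the edge `e_{k+1}` (for `k : Fin m`, edges being 1-indexed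
`e_1, …, e_m`) iff `s_i < k + 1 ≤ t_i`, i.e. iff `s_i ≤ k < t_i`. -/
def uses (s t : ι → ℕ) {m : ℕ} (i : ι) (k : Fin m) : Prop :=
  s i ≤ (k : ℕ) ∧ (k : ℕ) < t i

/-- The open rectangle `(s_i, t_i) × (h_i, h_i + d_i)` of job `i` drawn at height `h i`. -/
def rect (s t : ι → ℕ) (d h : ι → ℝ) (i : ι) : Set (ℝ × ℝ) :=
  Set.Ioo (s i : ℝ) (t i : ℝ) ×ˢ Set.Ioo (h i) (h i + d i)

/-- `(f, h)` is a Round-SAP packing of the jobs into `K` rounds under the edge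
capacities `c`: heights are nonnegative, each job fits below the capacity of each edge
it uses, and rectangles of distinct jobs placed in the same round are disjoint. -/
def IsSAPPacking (s t : ι → ℕ) (d : ι → ℝ) {m : ℕ} (c : Fin m → ℝ)
    {K : ℕ} (f : ι → Fin K) (h : ι → ℝ) : Prop :=
  (∀ i, 0 ≤ h i) ∧
  (∀ i (k : Fin m), uses s t i k → h i + d i ≤ c k) ∧
  (∀ i j, i ≠ j → f i = f j → Disjoint (rect s t d h i) (rect s t d h j))

end PathSAP

namespace PathSAP

variable {ι : Type*} {s t : ι → ℕ} {d h h' : ι → ℝ} {i j : ι}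

theorem disjoint_rect_of_add_le (hij : h i + d i ≤ h j) :
    Disjoint (rect s t d h i) (rect s t d h j) :=
  Set.disjoint_left.2 fun _ hi hj => (hi.2.2.trans_le (hij.trans hj.2.1.le)).false

theorem disjoint_rect_of_sub_eq (hij : h' i - h i = h' j - h j)
    (hdisj : Disjoint (rect s t d h i) (rect s t d h j)) :
    Disjoint (rect s t d h' i) (rect s t d h' j) := by
  refine Set.disjoint_left.2 fun p hi hj => Set.disjoint_left.1 hdisj
    (show (p.1, p.2 - (h' i - h i)) ∈ rect s t d h i from ⟨hi.1, ?_, ?_⟩) ⟨hj.1, ?_, ?_⟩ <;>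
  linarith [hi.2.1, hi.2.2, hj.2.1, hj.2.2]

theorem disjoint_rect_of_mem_Ioo {y : ℝ} (hyi : y ∈ Set.Ioo (h i) (h i + d i))
    (hyj : y ∈ Set.Ioo (h j) (h j + d j))
    (hdisj : Disjoint (rect s t d h i) (rect s t d h j)) :
    Disjoint (rect s t d h' i) (rect s t d h' j) :=
  Set.disjoint_left.2 fun p hi hj =>
    Set.disjoint_left.1 hdisj (show (p.1, y) ∈ rect s t d h i from ⟨hi.1, hyi⟩) ⟨hj.1, hyj⟩

def slotBot : ℕ → ℝ
  | 0 => 0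
  | n + 1 => 2 ^ n

theorem slotBot_nonneg (n : ℕ) : 0 ≤ slotBot n := by
  cases n <;> simp only [slotBot] <;> positivity

theorem two_pow_le_slotBot {n n' : ℕ} (h : n < n') : (2 : ℝ) ^ n ≤ slotBot n' := by
  obtain ⟨m, rfl⟩ := Nat.exists_eq_add_of_lt h
  exact pow_le_pow_right₀ one_le_two (by omega)

theorem not_exists_two_pow_mem_Ioo_of_slot {n : ℕ} {y D : ℝ} (hlo : slotBot n ≤ y)
    (hhi : y + D ≤ 2 ^ n) : ¬ ∃ τ : ℕ, y < 2 ^ τ ∧ (2 : ℝ) ^ τ < y + D := by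
  rintro ⟨τ, hyτ, hτD⟩
  cases n with
  | zero => linarith [one_le_pow₀ (M₀ := ℝ) one_le_two (n := τ), pow_zero (2 : ℝ)]
  | succ m =>
    have hmτ : m < τ := (pow_lt_pow_iff_right₀ one_lt_two).1 (hlo.trans_lt hyτ)
    linarith [pow_le_pow_right₀ (one_le_two (α := ℝ)) (show m + 1 ≤ τ from hmτ)]

theorem pow_le_zpow_floor_logb {b y : ℝ} {n : ℕ} (hb : 1 < b) (h : b ^ n ≤ y) :
    b ^ n ≤ b ^ ⌊Real.logb b y⌋ := by
  have hn : (n : ℝ) ≤ Real.logb b y := by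
    rwa [Real.le_logb_iff_rpow_le hb ((pow_pos (zero_lt_one.trans hb) n).trans_le h),
      Real.rpow_natCast]
  rw [← zpow_natCast]
  exact zpow_le_zpow_right₀ hb.le (Int.le_floor.2 (mod_cast hn))

/-- `Relocation H D r n y`: the job with bottom `H` and demand `D` is moved to the new bottom `y`
inside slot `n`, into the `r`-th of the four rounds that replace its round. -/
inductive Relocation (H D : ℝ) : Fin 4 → ℕ → ℝ → Prop
  | belowPow (τ : ℕ) : H < 2 ^ τ → 2 ^ τ < H + D → Relocation H D 0 τ (2 ^ τ - D)
  | stay : 0 ≤ H → H + D ≤ 1 → Relocation H D 1 0 H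
  | belowMid (b : ℕ) : 2 ^ (b + 1) ≤ H → H < 3 * 2 ^ b → 3 * 2 ^ b < H + D →
      H + D ≤ 2 ^ (b + 2) → Relocation H D 1 (b + 1) (2 ^ (b + 1) - D)
  | dropOne : 1 ≤ H → H + D ≤ 2 → Relocation H D 2 0 (H - 1)
  | lowerHalf (b : ℕ) : 2 ^ (b + 1) ≤ H → H + D ≤ 3 * 2 ^ b →
      Relocation H D 2 (b + 1) (H - 2 ^ b)
  | upperHalf (b : ℕ) : 3 * 2 ^ b ≤ H → H + D ≤ 2 ^ (b + 2) →
      Relocation H D 3 (b + 1) (H - 2 ^ (b + 1))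

namespace Relocation

variable {H D H₂ D₂ y y₂ : ℝ} {r : Fin 4} {n : ℕ}

theorem exists_of_nonneg (hH : 0 ≤ H) : ∃ r n y, Relocation H D r n y := by
  by_cases hcross : ∃ τ : ℕ, H < 2 ^ τ ∧ (2 : ℝ) ^ τ < H + D
  · obtain ⟨τ, h₁, h₂⟩ := hcross
    exact ⟨_, _, _, belowPow τ h₁ h₂⟩
  push Not at hcross
  by_cases hlow : H + D ≤ 1
  · exact ⟨_, _, _, stay hH hlow⟩
  have hH1 : 1 ≤ H := by
    by_contra! hH1
    exact hlow (by simpa using hcross 0 (by simpa using hH1))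
  obtain ⟨a, ha, haH⟩ := exists_nat_pow_near hH1 one_lt_two
  have htop := hcross (a + 1) haH
  cases a with
  | zero => exact ⟨_, _, _, dropOne hH1 (by simpa using htop)⟩
  | succ b =>
    by_cases hlower : H + D ≤ 3 * 2 ^ b
    · exact ⟨_, _, _, lowerHalf b ha hlower⟩
    by_cases hupper : 3 * 2 ^ b ≤ H
    · exact ⟨_, _, _, upperHalf b hupper htop⟩
    exact ⟨_, _, _, belowMid b ha (not_le.1 hupper) (not_le.1 hlower) htop⟩

theorem slotBot_le (h : Relocation H D r n y) (hD : D ≤ 1) : slotBot n ≤ y := by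
  cases h with
  | belowPow =>
    cases n with
    | zero => simpa [slotBot]
    | succ m =>
      simp only [slotBot, pow_succ]
      linarith [one_le_pow₀ (M₀ := ℝ) one_le_two (n := m)]
  | stay hH _ => exact hH
  | belowMid b =>
    simp only [slotBot, pow_succ]
    linarith [one_le_pow₀ (M₀ := ℝ) one_le_two (n := b)]
  | dropOne h₁ _ => simp only [slotBot]; linarith
  | lowerHalf b h₁ _ => simp only [slotBot, pow_succ] at h₁ ⊢; linarith
  | upperHalf b h₁ _ => simp only [slotBot, pow_succ] at h₁ ⊢; linarith

theorem add_le_two_pow (h : Relocation H D r n y) : y + D ≤ 2 ^ n := by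
  cases h with
  | belowPow τ => simp
  | stay _ h₂ => simpa using h₂
  | belowMid b => simp
  | dropOne _ h₂ => simp only [pow_zero]; linarith
  | lowerHalf b _ h₂ => simp only [pow_succ] at h₂ ⊢; linarith
  | upperHalf b _ h₂ => simp only [pow_succ] at h₂ ⊢; linarith

theorem two_pow_le_max (h : Relocation H D r n y) (hD : 0 ≤ D) :
    (2 : ℝ) ^ n ≤ max 1 (H + D) := by
  cases h with
  | belowPow τ _ h₂ => exact le_max_of_le_right h₂.le
  | stay => simp
  | belowMid b h₁ => exact le_max_of_le_right (by linarith)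
  | dropOne => simp
  | lowerHalf b h₁ h₂ => exact le_max_of_le_right (by linarith)
  | upperHalf b h₁ h₂ => exact le_max_of_le_right (by simp only [pow_succ] at h₁ h₂ ⊢; linarith)

theorem sub_eq_or_exists_mem_Ioo (h : Relocation H D r n y) (h₂ : Relocation H₂ D₂ r n y₂) :
    y - H = y₂ - H₂ ∨ ∃ z, z ∈ Set.Ioo H (H + D) ∧ z ∈ Set.Ioo H₂ (H₂ + D₂) := by
  cases h <;> cases h₂
  case belowPow.belowPow h₁ h₂ h₃ h₄ => exact .inr ⟨_, ⟨h₁, h₂⟩, h₃, h₄⟩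
  case belowMid.belowMid _ h₁ h₂ _ _ h₃ h₄ _ => exact .inr ⟨_, ⟨h₁, h₂⟩, h₃, h₄⟩
  all_goals exact .inl (by ring)

theorem disjoint_rect {ni nj : ℕ}
    (hi : Relocation (h i) (d i) r ni (h' i)) (hj : Relocation (h j) (d j) r nj (h' j))
    (hdi : d i ≤ 1) (hdj : d j ≤ 1) (hdisj : Disjoint (rect s t d h i) (rect s t d h j)) :
    Disjoint (rect s t d h' i) (rect s t d h' j) := by
  rcases lt_trichotomy ni nj with hlt | rfl | hgt
  · exact disjoint_rect_of_add_le <|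
      hi.add_le_two_pow.trans ((two_pow_le_slotBot hlt).trans (hj.slotBot_le hdj))
  · rcases hi.sub_eq_or_exists_mem_Ioo hj with hshift | ⟨y, hyi, hyj⟩
    · exact disjoint_rect_of_sub_eq hshift hdisj
    · exact disjoint_rect_of_mem_Ioo hyi hyj hdisj
  · exact (disjoint_rect_of_add_le <|
      hj.add_le_two_pow.trans ((two_pow_le_slotBot hgt).trans (hi.slotBot_le hdi))).symm

end Relocation

end PathSAP

open PathSAP in
theorem sap_rounding_to_powers_of_two_general {ι : Type*} {m : ℕ}
    (c : Fin m → ℝ) (hc : ∀ k, 1 ≤ c k)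
    (s t : ι → ℕ) (d : ι → ℝ)
    (hd0 : ∀ i, 0 < d i) (hd1 : ∀ i, d i ≤ 1)
    (K : ℕ) (f : ι → Fin K) (h : ι → ℝ)
    (hpack : IsSAPPacking s t d c f h) :
    ∃ (f' : ι → Fin (4 * K)) (h' : ι → ℝ),
      IsSAPPacking s t d (fun k => (2 : ℝ) ^ (⌊Real.logb 2 (c k)⌋)) f' h' ∧
      ∀ i, ¬ ∃ τ : ℕ, h' i < 2 ^ τ ∧ ((2 : ℝ) ^ τ) < h' i + d i := by
  obtain ⟨hnn, hcap, hdisj⟩ := hpack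
  choose r n h' hrel using fun i => Relocation.exists_of_nonneg (D := d i) (hnn i)
  refine ⟨fun i => finProdFinEquiv (r i, f i), h',
    ⟨fun i => ?_, fun i k hk => ?_, fun i j hij hfij => ?_⟩, fun i => ?_⟩
  · exact (slotBot_nonneg _).trans ((hrel i).slotBot_le (hd1 i))
  · exact (hrel i).add_le_two_pow.trans <| pow_le_zpow_floor_logb one_lt_two <|
      ((hrel i).two_pow_le_max (hd0 i).le).trans (max_le (hc k) (hcap i k hk))
  · obtain ⟨hr, hf⟩ : r i = r j ∧ f i = f j := Prod.ext_iff.1 (finProdFinEquiv.injective hfij)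
    exact (hrel i).disjoint_rect (hr ▸ hrel j) (hd1 i) (hd1 j) (hdisj i j hij hf)
  · exact not_exists_two_pow_mem_Ioo_of_slot ((hrel i).slotBot_le (hd1 i))
      (hrel i).add_le_two_pow

open PathSAP in
/-- Assume `c_k ≥ 1` for every edge and `d_j ≤ 1` for every job (the
no-bottleneck assumption after scaling `c_min = 1`). Define rounded capacities
`c'_k = 2^{⌊log₂ c_k⌋}`. If `J` admits a Round-SAP packing into `K` rounds under `(c_k)`,
then `J` admits a Round-SAP packing into `4K` rounds under `(c'_k)` in which additionally
no rectangle is sliced by a horizontal line at an integer power of 2: there is no job `j`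
and integer `t ≥ 0` with `h_j < 2^t < h_j + d_j`. -/
theorem sap_rounding_to_powers_of_two {ι : Type*} [Fintype ι] {m : ℕ}
    (c : Fin m → ℝ) (hc : ∀ k, 1 ≤ c k)
    (s t : ι → ℕ) (d : ι → ℝ)
    (hst : ∀ i, s i < t i) (htm : ∀ i, t i ≤ m)
    (hd0 : ∀ i, 0 < d i) (hd1 : ∀ i, d i ≤ 1)
    (K : ℕ) (f : ι → Fin K) (h : ι → ℝ)
    (hpack : IsSAPPacking s t d c f h) :
    ∃ (f' : ι → Fin (4 * K)) (h' : ι → ℝ),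
      IsSAPPacking s t d (fun k => (2 : ℝ) ^ (⌊Real.logb 2 (c k)⌋)) f' h' ∧
      ∀ i, ¬ ∃ τ : ℕ, h' i < 2 ^ τ ∧ ((2 : ℝ) ^ τ) < h' i + d i :=
  sap_rounding_to_powers_of_two_general c hc s t d hd0 hd1 K f h hpack
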